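/- Suppose the sets {F_j}_{j ∈ A} are pairwise disjoint and {F_j}_{j ∈ B} are pairwise disjoint (A, B index sets over subsets of a finite set F), w ∈ ℝ_{≥0}^F, and there exists a fractional point ȳ ∈ [0,1]^F with ȳ(F_j) = 1 for all j ∈ A ∪ B and Σ_i w_i ȳ_i ≤ B₀. Then there exists an integral point ŷ ∈ {0,1}^F with ŷ(F_j) = 1 for all j ∈ A ∪ B and Σ_i w_i ŷ_i ≤ B₀. -/

import Mathlib

/-!
The minimum of the cost over the compact polytope of fractional exact covers is attained at an
extreme point (Krein–Milman applied to the exposed face of minimisers), so it suffices that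
extreme points are integral. If `z` is not integral, let `S` be its set of fractional
coordinates. A row meeting `S` meets it at least twice (its sum is an integer), and every
coordinate lies in at most one `A`-row and one `B`-row, so there are at most `#S` rows meeting `S`.
If there are fewer, the row-sum map on vectors supported on `S` has a nontrivial kernel by
dimension count; if there are exactly `#S`, the `A`-rows and the `B`-rows both partition `S`, so
the two families have the same total and the rows are linearly dependent. A nonzero kernel
vector `d` keeps `z ± t d` in the polytope for small `t`, contradicting extremality.
-/

open Finset Filter Topology

section RowSums

variable {ι κ : Type*} (K : Type*) [Field K] (Fj : κ → Finset ι)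

def rowSums (R : Finset κ) : (ι → K) →ₗ[K] R → K :=
  LinearMap.pi fun j => ∑ i ∈ Fj j, LinearMap.proj i

@[simp]
theorem rowSums_apply (R : Finset κ) (d : ι → K) (j : R) :
    rowSums K Fj R d j = ∑ i ∈ Fj j, d i := by
  simp [rowSums]

end RowSums

theorem extendByZero_apply_of_notMem {ι K : Type*} [Semiring K] {S : Finset ι} (x : S → K)
    {i : ι} (hi : i ∉ S) : Function.ExtendByZero.linearMap K ((↑) : S → ι) x i = 0 :=
  Function.extend_apply' _ _ _ fun ⟨i', hi'⟩ => hi (hi' ▸ i'.2)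

section Counting

variable {ι κ : Type*} [DecidableEq ι] {Fj : κ → Finset ι} {R : Finset κ} {S : Finset ι}

theorem two_mul_card_add_card_sdiff_biUnion_le (hR : (R : Set κ).PairwiseDisjoint Fj)
    (hS₂ : ∀ j ∈ R, 2 ≤ #(Fj j ∩ S)) :
    2 * #R + #(S \ R.biUnion Fj) ≤ #S := by
  have hcovered : #(S ∩ R.biUnion Fj) = ∑ j ∈ R, #(Fj j ∩ S) := by
    rw [Finset.inter_comm, biUnion_inter, card_biUnion (hR.mono fun j => inter_subset_left)]
  have hsplit := card_inter_add_card_sdiff S (R.biUnion Fj)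
  have hrows := card_nsmul_le_sum R (fun j => #(Fj j ∩ S)) 2 hS₂
  rw [smul_eq_mul] at hrows
  lia

theorem sum_sum_eq_sum_of_subset_biUnion {M : Type*} [AddCommMonoid M]
    (hR : (R : Set κ).PairwiseDisjoint Fj) (hSR : S ⊆ R.biUnion Fj)
    {d : ι → M} (hd : ∀ i ∉ S, d i = 0) :
    ∑ j ∈ R, ∑ i ∈ Fj j, d i = ∑ i ∈ S, d i := by
  rw [← sum_biUnion hR]
  exact (sum_subset hSR fun i _ hi => hd i hi).symm

end Counting

theorem finrank_range_rowSums_prod_lt {ι κ : Type*} [DecidableEq ι] (K : Type*) [Field K]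
    {Fj : κ → Finset ι} {R₁ R₂ : Finset κ} (hR₁ : (R₁ : Set κ).PairwiseDisjoint Fj)
    (hR₂ : (R₂ : Set κ).PairwiseDisjoint Fj) {S : Finset ι} (hS : S.Nonempty)
    (h₁ : ∀ j ∈ R₁, 2 ≤ #(Fj j ∩ S)) (h₂ : ∀ j ∈ R₂, 2 ≤ #(Fj j ∩ S)) :
    Module.finrank K (LinearMap.range ((rowSums K Fj R₁).prod (rowSums K Fj R₂) ∘ₗ
      Function.ExtendByZero.linearMap K ((↑) : S → ι))) < #S := by
  classical
  set Φ := (rowSums K Fj R₁).prod (rowSums K Fj R₂) ∘ₗ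
    Function.ExtendByZero.linearMap K ((↑) : S → ι)
  have hcount₁ := two_mul_card_add_card_sdiff_biUnion_le hR₁ h₁
  have hcount₂ := two_mul_card_add_card_sdiff_biUnion_le hR₂ h₂
  have hcod : Module.finrank K ((R₁ → K) × (R₂ → K)) = #R₁ + #R₂ := by simp
  rcases (show #R₁ + #R₂ ≤ #S by lia).lt_or_eq with hlt | heq
  · exact (Submodule.finrank_le _).trans_lt (hcod ▸ hlt)
  have hcov₁ : S ⊆ R₁.biUnion Fj := sdiff_eq_empty_iff_subset.1 (card_eq_zero.1 (by lia))
  have hcov₂ : S ⊆ R₂.biUnion Fj := sdiff_eq_empty_iff_subset.1 (card_eq_zero.1 (by lia))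
  obtain ⟨j₀, hj₀⟩ : R₁.Nonempty := card_pos.1 (by have := hS.card_pos; lia)
  refine heq ▸ hcod ▸ Submodule.finrank_lt fun htop => ?_
  obtain ⟨x, hx⟩ : (Pi.single ⟨j₀, hj₀⟩ 1, 0) ∈ LinearMap.range Φ := htop ▸ Submodule.mem_top
  set d := Function.ExtendByZero.linearMap K ((↑) : S → ι) x
  have hd : ∀ i ∉ S, d i = 0 := fun i => extendByZero_apply_of_notMem x
  have htotal₁ : ∑ j ∈ R₁, ∑ i ∈ Fj j, d i = 1 := by
    rw [← sum_coe_sort]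
    simpa [Φ, d] using congrArg (fun p => ∑ j, p.1 j) hx
  have htotal₂ : ∑ j ∈ R₂, ∑ i ∈ Fj j, d i = 0 := by
    rw [← sum_coe_sort]
    simpa [Φ, d] using congrArg (fun p => ∑ j, p.2 j) hx
  rw [sum_sum_eq_sum_of_subset_biUnion hR₁ hcov₁ hd] at htotal₁
  rw [sum_sum_eq_sum_of_subset_biUnion hR₂ hcov₂ hd, htotal₁] at htotal₂
  exact one_ne_zero htotal₂

theorem exists_ne_zero_forall_sum_eq_zero {ι κ : Type*} [DecidableEq ι] [DecidableEq κ]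
    (K : Type*) [Field K] {A B : Finset κ} {Fj : κ → Finset ι}
    (hA : (A : Set κ).PairwiseDisjoint Fj) (hB : (B : Set κ).PairwiseDisjoint Fj)
    {S : Finset ι} (hS : S.Nonempty) (hS₂ : ∀ j ∈ A ∪ B, (Fj j ∩ S).Nonempty → 2 ≤ #(Fj j ∩ S)) :
    ∃ d : ι → K, d ≠ 0 ∧ (∀ i ∉ S, d i = 0) ∧ ∀ j ∈ A ∪ B, ∑ i ∈ Fj j, d i = 0 := by
  set RA := {j ∈ A | (Fj j ∩ S).Nonempty}
  set RB := {j ∈ B | (Fj j ∩ S).Nonempty}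
  set extend := Function.ExtendByZero.linearMap K ((↑) : S → ι)
  set Φ := (rowSums K Fj RA).prod (rowSums K Fj RB) ∘ₗ extend
  have hrange : Module.finrank K (LinearMap.range Φ) < #S :=
    finrank_range_rowSums_prod_lt K (hA.subset (coe_subset.2 (filter_subset _ _)))
      (hB.subset (coe_subset.2 (filter_subset _ _))) hS
      (fun j hj => hS₂ j (mem_union_left _ (mem_filter.1 hj).1) (mem_filter.1 hj).2)
      (fun j hj => hS₂ j (mem_union_right _ (mem_filter.1 hj).1) (mem_filter.1 hj).2)
  obtain ⟨x, hxΦ, hx0⟩ : ∃ x, Φ x = 0 ∧ x ≠ 0 := by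
    by_contra! h
    refine hrange.ne ((LinearMap.finrank_range_of_inj ((injective_iff_map_eq_zero Φ).2 h)).trans ?_)
    simp
  refine ⟨extend x, fun h => hx0 ?_, fun i => extendByZero_apply_of_notMem x, fun j hj => ?_⟩
  · exact Function.extend_injective Subtype.val_injective (0 : ι → K)
      (h.trans (map_zero extend).symm)
  by_cases hjS : (Fj j ∩ S).Nonempty
  · have hrows := Prod.ext_iff.1 hxΦ
    rcases mem_union.1 hj with hjA | hjB
    · simpa [Φ] using congrFun hrows.1 ⟨j, mem_filter.2 ⟨hjA, hjS⟩⟩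
    · simpa [Φ] using congrFun hrows.2 ⟨j, mem_filter.2 ⟨hjB, hjS⟩⟩
  · exact sum_eq_zero fun i hi =>
      extendByZero_apply_of_notMem x fun hiS => hjS ⟨i, mem_inter.2 ⟨hi, hiS⟩⟩

theorem exists_ne_mem_Ioo_of_sum_eq_one {ι : Type*} [DecidableEq ι] {s : Finset ι} {z : ι → ℝ}
    (hz : ∀ i ∈ s, z i ∈ Set.Icc 0 1) (hsum : ∑ i ∈ s, z i = 1) {i : ι} (hi : i ∈ s)
    (hzi : z i ∈ Set.Ioo 0 1) : ∃ i' ∈ s, i' ≠ i ∧ z i' ∈ Set.Ioo 0 1 := by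
  by_contra! h
  have h01 : ∀ k ∈ s.erase i, z k = 0 ∨ z k = 1 := fun k hk => by
    obtain ⟨hki, hks⟩ := mem_erase.1 hk
    simpa using (Set.Icc_sdiff_Ioo_same zero_le_one).subset ⟨hz k hks, h k hks hki⟩
  have hsplit := add_sum_erase s z hi
  by_cases hone : ∃ k ∈ s.erase i, z k = 1
  · obtain ⟨k, hk, hzk⟩ := hone
    have hk_le := single_le_sum (fun k hk => (hz k (mem_of_mem_erase hk)).1) hk
    linarith [hzi.1]
  · have : ∑ k ∈ s.erase i, z k = 0 :=
      sum_eq_zero fun k hk => (h01 k hk).resolve_right fun h1 => hone ⟨k, hk, h1⟩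
    linarith [hzi.2]

theorem eventually_forall_add_mul_mem_Icc {ι : Type*} [Finite ι] {z d : ι → ℝ}
    (hz : ∀ i, z i ∈ Set.Icc 0 1) (hd : ∀ i, z i ∉ Set.Ioo 0 1 → d i = 0) :
    ∀ᶠ t in 𝓝 (0 : ℝ), ∀ i, z i + t * d i ∈ Set.Icc 0 1 := by
  refine eventually_all.2 fun i => ?_
  by_cases hzi : z i ∈ Set.Ioo 0 1
  · have : Tendsto (fun t => z i + t * d i) (𝓝 0) (𝓝 (z i)) :=
      Continuous.tendsto' (by fun_prop) 0 _ (by simp)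
    exact (this.eventually (Ioo_mem_nhds hzi.1 hzi.2)).mono fun t ht => Set.Ioo_subset_Icc_self ht
  · simp [hd i hzi, hz i]

theorem eq_zero_of_mem_extremePoints {E : Type*} [AddCommGroup E] [Module ℝ E] {P : Set E}
    {z d : E} (hz : z ∈ P.extremePoints ℝ) (hd : ∀ᶠ t in 𝓝 (0 : ℝ), z + t • d ∈ P) : d = 0 := by
  have hd' : ∀ᶠ t in 𝓝[>] (0 : ℝ), 0 < t ∧ z + t • d ∈ P ∧ z + (-t) • d ∈ P :=
    eventually_mem_nhdsWithin.and (nhdsWithin_le_nhds (hd.and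
      ((continuous_neg.tendsto' (0 : ℝ) 0 neg_zero).eventually hd)))
  obtain ⟨t, ht, hplus, hminus⟩ := hd'.exists
  have hmid : z ∈ openSegment ℝ (z + t • d) (z + (-t) • d) :=
    ⟨1 / 2, 1 / 2, by norm_num, by norm_num, by norm_num, by
      rw [smul_add, smul_add, add_add_add_comm, ← add_smul, smul_smul, smul_smul, ← add_smul]
      norm_num⟩
  have hends := (mem_extremePoints.1 hz).2 _ hplus _ hminus hmid
  simpa [ht.ne'] using hends.1

theorem IsCompact.exists_mem_extremePoints_isMinOn {E : Type*} [AddCommGroup E] [Module ℝ E]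
    [TopologicalSpace E] [T2Space E] [IsTopologicalAddGroup E] [ContinuousSMul ℝ E]
    [LocallyConvexSpace ℝ E] {P : Set E} (hP : IsCompact P) (hne : P.Nonempty)
    (l : StrongDual ℝ E) : ∃ z ∈ P.extremePoints ℝ, IsMinOn l P z := by
  have hexp : IsExposed ℝ P ((-l).toExposed P) := ContinuousLinearMap.toExposed.isExposed
  obtain ⟨z₀, hz₀, hmin⟩ := hP.exists_isMinOn hne l.continuous.continuousOn
  obtain ⟨z, hz⟩ := (hexp.isCompact hP).extremePoints_nonempty
    ⟨z₀, hz₀, fun y hy => by simpa using hmin hy⟩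
  refine ⟨z, hexp.isExtreme.extremePoints_subset_extremePoints hz, fun y hy => ?_⟩
  simpa using hz.1.2 y hy

def coverPolytope {ι κ : Type*} (R : Finset κ) (Fj : κ → Finset ι) : Set (ι → ℝ) :=
  {z | (∀ i, z i ∈ Set.Icc 0 1) ∧ ∀ j ∈ R, ∑ i ∈ Fj j, z i = 1}

theorem isCompact_coverPolytope {ι κ : Type*} [Finite ι] (R : Finset κ) (Fj : κ → Finset ι) :
    IsCompact (coverPolytope R Fj) := by
  refine (isCompact_univ_pi fun _ => isCompact_Icc).of_isClosed_subset ?_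
    fun z hz => Set.mem_univ_pi.2 hz.1
  simp only [coverPolytope, Set.ofPred_and, Set.ofPred_forall]
  exact (isClosed_iInter fun i => isClosed_Icc.preimage (continuous_apply i)).inter
    (isClosed_iInter fun j => isClosed_iInter fun _ => isClosed_eq (by fun_prop) continuous_const)

theorem eq_zero_or_eq_one_of_mem_extremePoints {ι κ : Type*} [Fintype ι] [DecidableEq κ]
    {A B : Finset κ} {Fj : κ → Finset ι}
    (hA : (A : Set κ).PairwiseDisjoint Fj) (hB : (B : Set κ).PairwiseDisjoint Fj) {z : ι → ℝ}
    (hz : z ∈ (coverPolytope (A ∪ B) Fj).extremePoints ℝ) (i : ι) : z i = 0 ∨ z i = 1 := by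
  classical
  obtain ⟨hbox, hrows⟩ := hz.1
  suffices z i ∉ Set.Ioo 0 1 by
    simpa using (Set.Icc_sdiff_Ioo_same zero_le_one).subset ⟨hbox i, this⟩
  intro hzi
  set S := univ.filter fun i => z i ∈ Set.Ioo 0 1
  have hS₂ : ∀ j ∈ A ∪ B, (Fj j ∩ S).Nonempty → 2 ≤ #(Fj j ∩ S) := by
    rintro j hj ⟨k, hk⟩
    obtain ⟨hkj, hkS⟩ := mem_inter.1 hk
    obtain ⟨k', hk'j, hne, hk'⟩ := exists_ne_mem_Ioo_of_sum_eq_one (fun i _ => hbox i)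
      (hrows j hj) hkj (by simpa [S] using hkS)
    exact one_lt_card.2 ⟨k', mem_inter.2 ⟨hk'j, by simpa [S] using hk'⟩, k, hk, hne⟩
  obtain ⟨d, hd0, hdS, hdrows⟩ :=
    exists_ne_zero_forall_sum_eq_zero ℝ hA hB ⟨i, by simpa [S] using hzi⟩ hS₂
  refine hd0 (eq_zero_of_mem_extremePoints hz ?_)
  filter_upwards [eventually_forall_add_mul_mem_Icc hbox fun i hi => hdS i (by simpa [S] using hi)]
    with t ht
  refine ⟨ht, fun j hj => ?_⟩
  simp [sum_add_distrib, ← mul_sum, hrows j hj, hdrows j hj]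

theorem exists_integral_rounding_general {ι κ : Type*} [Fintype ι] [DecidableEq κ]
    (A B : Finset κ) (Fj : κ → Finset ι)
    (hA : (A : Set κ).Pairwise fun j j' => Disjoint (Fj j) (Fj j'))
    (hB : (B : Set κ).Pairwise fun j j' => Disjoint (Fj j) (Fj j'))
    (w : ι → ℝ) (B₀ : ℝ)
    (ybar : ι → ℝ) (hy0 : ∀ i, 0 ≤ ybar i) (hy1 : ∀ i, ybar i ≤ 1)
    (hcov : ∀ j ∈ A ∪ B, ∑ i ∈ Fj j, ybar i = 1)
    (hbud : ∑ i, w i * ybar i ≤ B₀) :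
    ∃ yhat : ι → ℝ, (∀ i, yhat i = 0 ∨ yhat i = 1) ∧
      (∀ j ∈ A ∪ B, ∑ i ∈ Fj j, yhat i = 1) ∧
      ∑ i, w i * yhat i ≤ B₀ := by
  have hybar : ybar ∈ coverPolytope (A ∪ B) Fj := ⟨fun i => ⟨hy0 i, hy1 i⟩, hcov⟩
  let cost : StrongDual ℝ (ι → ℝ) := ∑ i, w i • ContinuousLinearMap.proj i
  have hcost : ∀ y, cost y = ∑ i, w i * y i := fun y => by simp [cost]
  obtain ⟨z, hz, hmin⟩ :=
    (isCompact_coverPolytope (A ∪ B) Fj).exists_mem_extremePoints_isMinOn ⟨ybar, hybar⟩ cost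
  refine ⟨z, eq_zero_or_eq_one_of_mem_extremePoints hA hB hz, hz.1.2, ?_⟩
  calc ∑ i, w i * z i = cost z := (hcost z).symm
    _ ≤ cost ybar := hmin hybar
    _ ≤ B₀ := (hcost ybar).trans_le hbud

/-- Given a fractional point ȳ of the two-partition-matroid polytope with
budget Σ w ȳ ≤ B₀, there is an integral point ŷ with the same constraints
and Σ w ŷ ≤ B₀. -/
theorem exists_integral_rounding {ι κ : Type*} [Fintype ι] [DecidableEq κ]
    (A B : Finset κ) (Fj : κ → Finset ι)
    (hA : (A : Set κ).Pairwise fun j j' => Disjoint (Fj j) (Fj j'))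
    (hB : (B : Set κ).Pairwise fun j j' => Disjoint (Fj j) (Fj j'))
    (w : ι → ℝ) (hw : ∀ i, 0 ≤ w i) (B₀ : ℝ) (hB₀ : 0 ≤ B₀)
    (ybar : ι → ℝ) (hy0 : ∀ i, 0 ≤ ybar i) (hy1 : ∀ i, ybar i ≤ 1)
    (hcov : ∀ j ∈ A ∪ B, ∑ i ∈ Fj j, ybar i = 1)
    (hbud : ∑ i, w i * ybar i ≤ B₀) :
    ∃ yhat : ι → ℝ, (∀ i, yhat i = 0 ∨ yhat i = 1) ∧
      (∀ j ∈ A ∪ B, ∑ i ∈ Fj j, yhat i = 1) ∧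
      ∑ i, w i * yhat i ≤ B₀ :=
  exists_integral_rounding_general A B Fj hA hB w B₀ ybar hy0 hy1 hcov hbud
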